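/- arXiv:1309.4620 — 4 statements merged into one kernel-verified Lean document; each statement's English description precedes it below -/
import Mathlib

section
/- Let A be a reduced Noetherian commutative ring with total ring of fractions Q(A), and let Ā denote the integral closure of A in Q(A). Then Ā is a finite A-module if and only if the conductor C_A = Ann_A(Ā/A) contains a non-zerodivisor of A. -/
set_option synthInstance.maxHeartbeats 1000000
set_option maxHeartbeats 1000000

open scoped nonZeroDivisors

noncomputable section

/-- The conductor of a reduced ring `A` in its integral closure inside `Q(A)`:
`C_A = {a : A | a · Ā ⊆ A}`. -/
def conductorIdeal (A : Type*) [CommRing A] : Ideal A where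
  carrier := {a : A | ∀ x ∈ integralClosure A (FractionRing A),
      algebraMap A (FractionRing A) a * x ∈ (algebraMap A (FractionRing A)).range}
  add_mem' := by
    intro a b ha hb x hx
    rw [map_add, add_mul]
    exact add_mem (ha x hx) (hb x hx)
  zero_mem' := by
    intro x hx
    rw [map_zero, zero_mul]
    exact zero_mem _
  smul_mem' := by
    intro c a ha x hx
    obtain ⟨y, hy⟩ := ha x hx
    refine ⟨c * y, ?_⟩
    rw [map_mul, hy, smul_eq_mul, map_mul, mul_assoc]

/-! The conductor contains a non-zerodivisor exactly when `Ā` is a fractional ideal of `A`.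
A finitely generated submodule of `Q(A)` is fractional: clear the denominators of its generators.
Conversely, multiplication by a common denominator is injective on `Q(A)` and maps a fractional
ideal into the image of `A`, which is a Noetherian `A`-module. -/

open FractionalIdeal

theorem IsFractional.fg {R P : Type*} [CommRing R] [IsNoetherianRing R] [CommRing P]
    [Algebra R P] {S : Submonoid R} [IsLocalization S P] {I : Submodule R P}
    (hI : IsFractional S I) : I.FG := by
  obtain ⟨a, haS, ha⟩ := hI
  have hinj : Function.Injective (LinearMap.mulLeft R (algebraMap R P a)) := fun _ _ =>
    (IsLocalization.map_units P ⟨a, haS⟩).mul_left_cancel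
  refine Submodule.fg_of_fg_map_injective _ hinj
    (Submodule.FG.of_le (Submodule.fg_span_singleton (1 : P)) ?_)
  rintro _ ⟨x, hx, rfl⟩
  rw [← Submodule.one_eq_span, LinearMap.mulLeft_apply, ← Algebra.smul_def]
  exact Submodule.mem_one.2 (ha x hx)

theorem isFractional_integralClosure_iff (A : Type*) [CommRing A] :
    IsFractional A⁰ (Subalgebra.toSubmodule (integralClosure A (FractionRing A))) ↔
      ∃ g ∈ conductorIdeal A, g ∈ A⁰ := by
  simp only [IsFractional, Subalgebra.mem_toSubmodule, Algebra.smul_def]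
  exact ⟨fun ⟨g, hg, h⟩ => ⟨g, h, hg⟩, fun ⟨g, h, hg⟩ => ⟨g, hg, h⟩⟩

theorem normalization_finite_iff_conductor_contains_nonZeroDivisor_general
    (A : Type*) [CommRing A] [IsNoetherianRing A] :
    Module.Finite A (integralClosure A (FractionRing A)) ↔
      ∃ g ∈ conductorIdeal A, g ∈ A⁰ := by
  rw [← isFractional_integralClosure_iff]
  exact (Module.Finite.iff_fg
    (N := Subalgebra.toSubmodule (integralClosure A (FractionRing A)))).trans
      ⟨isFractional_of_fg, IsFractional.fg⟩

/-- A reduced Noetherian commutative ring has finite normalization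
(i.e. the integral closure `Ā` of `A` in its total ring of fractions `Q(A)` is a
finite `A`-module) if and only if the conductor `C_A = Ann_A(Ā/A)` contains a
non-zerodivisor of `A`. -/
theorem normalization_finite_iff_conductor_contains_nonZeroDivisor
    (A : Type*) [CommRing A] [IsReduced A] [IsNoetherianRing A] :
    Module.Finite A (integralClosure A (FractionRing A)) ↔
      ∃ g ∈ conductorIdeal A, g ∈ A⁰ :=
  normalization_finite_iff_conductor_contains_nonZeroDivisor_general A
end
end

section
/- (Grauert–Remmert criterion) Let A be a reduced Noetherian commutative ring whose integral closure Ā in Q(A) is a finite A-module, and let J be a test ideal for A. Then A is integrally closed in Q(A) if and only if A = End_A(J), i.e., if and only if every element x ∈ Q(A) with x·J ⊆ J already lies in A. -/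
/-!
If `Ā = A` and `x·J ⊆ J`, then `x` acts on the finitely generated module `J`, which contains a
non-zerodivisor, so `x` is integral by the determinant trick and lies in `A`.

Conversely, `J ⊆ √C_A` and `J` is finitely generated, so `J ^ n ⊆ C_A` and `x·J ^ n ⊆ A` for
`x ∈ Ā`. We lower the exponent: if `x·J ^ (k+1) ⊆ A` and `b ∈ J ^ k`, then `y = x b` is integral
with `y·J ⊆ A`. For `j ∈ J`, `c = y j` is a root of the monic equation of `y` scaled by `j`, whose
lower coefficients lie in `J`; hence `c ∈ √J = J`. So `y·J ⊆ J`, i.e. `y ∈ A`, and `x·J ^ k ⊆ A`.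
At `k = 0` this says `x ∈ A`.
-/

set_option synthInstance.maxHeartbeats 1000000
set_option maxHeartbeats 1000000

open scoped nonZeroDivisors

noncomputable section

/-- A test ideal for `A`: an ideal containing a non-zerodivisor, radical, and with
`V(C_A) ⊆ V(J)`. -/
def IsTestIdeal (A : Type*) [CommRing A] (J : Ideal A) : Prop :=
  (∃ g ∈ J, g ∈ A⁰) ∧ J.IsRadical ∧
    PrimeSpectrum.zeroLocus (conductorIdeal A : Set A) ⊆
      PrimeSpectrum.zeroLocus (J : Set A)

section

variable {A Q : Type*} [CommRing A] [CommRing Q] [Algebra A Q]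

theorem aeval_restrict_mulLeft_apply {N : Submodule A Q} {x : Q} (hx : ∀ n ∈ N, x * n ∈ N)
    (p : Polynomial A) (n : N) :
    (Polynomial.aeval ((LinearMap.mulLeft A x).restrict hx) p n : Q) =
      Polynomial.aeval x p * n := by
  simp only [Polynomial.aeval_eq_sum_range, LinearMap.coe_sum, Finset.sum_apply,
    Submodule.coe_sum, Finset.sum_mul]
  refine Finset.sum_congr rfl fun k _ => ?_
  rw [LinearMap.smul_apply, Submodule.coe_smul,
    Module.End.pow_restrict (f' := LinearMap.mulLeft A x) k hx, LinearMap.coe_restrict_apply,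
    LinearMap.pow_mulLeft, LinearMap.mulLeft_apply, smul_mul_assoc]

theorem isIntegral_of_mul_mem_of_fg {N : Submodule A Q} (hN : N.FG) {m : Q} (hmN : m ∈ N)
    (hm : m ∈ Q⁰) {x : Q} (hx : ∀ n ∈ N, x * n ∈ N) : IsIntegral A x := by
  have : Module.Finite A N := Module.Finite.iff_fg.mpr hN
  obtain ⟨p, hp, hφ⟩ := LinearMap.exists_monic_and_aeval_eq_zero A
    ((LinearMap.mulLeft A x).restrict hx)
  refine ⟨p, hp, (mul_right_mem_nonZeroDivisors_eq_zero_iff hm).mp ?_⟩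
  rw [← Polynomial.aeval_def]
  simpa [hφ] using (aeval_restrict_mulLeft_apply hx p ⟨m, hmN⟩).symm

theorem Ideal.IsRadical.mem_of_algebraMap_eq_mul {I : Ideal A} (hI : I.IsRadical)
    (hinj : Function.Injective (algebraMap A Q)) {y : Q} (hy : IsIntegral A y) {j c : A}
    (hj : j ∈ I) (hc : algebraMap A Q c = y * algebraMap A Q j) : c ∈ I := by
  obtain ⟨p, hp, hpy⟩ := hy
  have hroot : (p.scaleRoots j).IsRoot c := by
    have h := Polynomial.scaleRoots_aeval_eq_zero (r := j) hpy
    rw [mul_comm, ← hc, Polynomial.aeval_algebraMap_apply, ← map_zero (algebraMap A Q)] at h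
    exact hinj h
  refine hI ⟨(p.scaleRoots j).natDegree, ?_⟩
  exact (Polynomial.scaleRoots.isWeaklyEisensteinAt p hj).pow_natDegree_le_of_root_of_monic_mem
    hroot ((Polynomial.monic_scaleRoots_iff j).mpr hp) _ le_rfl

theorem mem_range_of_forall_mul_pow_mem_range {I : Ideal A} (hI : I.IsRadical)
    (hinj : Function.Injective (algebraMap A Q))
    (hEnd : ∀ y : Q, (∀ j ∈ I, y * algebraMap A Q j ∈ algebraMap A Q '' I) →
      y ∈ Set.range (algebraMap A Q))
    {x : Q} (hx : IsIntegral A x) (n : ℕ)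
    (hn : ∀ a ∈ I ^ n, x * algebraMap A Q a ∈ Set.range (algebraMap A Q)) :
    x ∈ Set.range (algebraMap A Q) := by
  induction n with
  | zero => simpa using hn 1 (by simp)
  | succ k ih =>
    refine ih fun b hb => hEnd _ fun j hj => ?_
    obtain ⟨c, hc⟩ := hn (b * j) (pow_succ I k ▸ Ideal.mul_mem_mul hb hj)
    have hc' : algebraMap A Q c = x * algebraMap A Q b * algebraMap A Q j := by
      rw [hc, map_mul, mul_assoc]
    exact ⟨c, hI.mem_of_algebraMap_eq_mul hinj (hx.mul isIntegral_algebraMap) hj hc', hc'⟩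

end

theorem grauert_remmert_criterion_general
    (A : Type*) [CommRing A] [IsNoetherianRing A]
    (J : Ideal A) (hJ : IsTestIdeal A J) :
    integralClosure A (FractionRing A) = ⊥ ↔
      ∀ x : FractionRing A,
        (∀ j ∈ J, x * algebraMap A (FractionRing A) j ∈
          algebraMap A (FractionRing A) '' J) →
        x ∈ Set.range (algebraMap A (FractionRing A)) := by
  obtain ⟨⟨g, hgJ, hg⟩, hrad, hV⟩ := hJ
  have hJfg : J.FG := IsNoetherian.noetherian J
  constructor
  · intro hbot x hx
    have hint : IsIntegral A x :=
      isIntegral_of_mul_mem_of_fg (Submodule.FG.map (Algebra.linearMap A _) hJfg) ⟨g, hgJ, rfl⟩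
        (IsLocalization.map_units _ ⟨g, hg⟩).mem_nonZeroDivisors
        (by rintro _ ⟨j, hj, rfl⟩; exact hx j hj)
    exact Algebra.mem_bot.mp (hbot ▸ hint)
  · intro hEnd
    obtain ⟨n, hn⟩ := Ideal.exists_pow_le_of_le_radical_of_fg
      ((PrimeSpectrum.zeroLocus_subset_zeroLocus_iff _ _).mp hV) hJfg
    refine eq_bot_iff.mpr fun x hx => Algebra.mem_bot.mpr ?_
    refine mem_range_of_forall_mul_pow_mem_range hrad (IsFractionRing.injective A _) hEnd hx n
      fun a ha => ?_
    obtain ⟨c, hc⟩ := hn ha x hx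
    exact ⟨c, hc.trans (mul_comm _ _)⟩

/-- **Grauert–Remmert criterion.** Let `A` be a reduced Noetherian ring
whose integral closure `Ā` in `Q(A)` is a finite `A`-module, and let `J` be a test
ideal for `A`. Then `A` is integrally closed in `Q(A)` if and only if every
`x ∈ Q(A)` with `x·J ⊆ J` lies in (the image of) `A`. -/
theorem grauert_remmert_criterion
    (A : Type*) [CommRing A] [IsReduced A] [IsNoetherianRing A]
    [Module.Finite A (integralClosure A (FractionRing A))]
    (J : Ideal A) (hJ : IsTestIdeal A J) :
    integralClosure A (FractionRing A) = ⊥ ↔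
      ∀ x : FractionRing A,
        (∀ j ∈ J, x * algebraMap A (FractionRing A) j ∈
          algebraMap A (FractionRing A) '' J) →
        x ∈ Set.range (algebraMap A (FractionRing A)) :=
  grauert_remmert_criterion_general A J hJ
end
end

section
/- Let A be a reduced Noetherian commutative ring whose integral closure Ā in Q(A) is a finite A-module, let A ⊆ A′ ⊆ Ā be an intermediate ring, and let J be a test ideal for A. Then the radical √(J·A′) of the extension of J to A′ is a test ideal for A′. -/
set_option synthInstance.maxHeartbeats 1000000
set_option maxHeartbeats 1000000

open scoped nonZeroDivisors

noncomputable section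

/-! Since `A ⊆ A′ ⊆ Q(A)`, the ring `Q(A)` is also the total ring of fractions of `A′`, and an
element integral over `A′` is integral over `A`; hence `C_A · Ā′ ⊆ A′`, i.e. `C_A ⊆ C_{A′} ∩ A`.
A prime `P` of `A′` containing `C_{A′}` therefore contracts to a prime containing `C_A`, hence `J`,
so `P ⊇ J A′` and `P ⊇ √(J A′)`. Non-zerodivisors of `A` stay non-zerodivisors in `A′ ⊆ Q(A)`. -/

namespace IsFractionRing

variable {B K : Type*} [CommRing B] [CommRing K] [Algebra B K]

theorem nonZeroDivisors_le_comap_of_injective {R : Type*} [CommRing R] [Algebra R B]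
    [Algebra R K] [IsScalarTower R B K] [IsFractionRing R K]
    (hB : Function.Injective (algebraMap B K)) : R⁰ ≤ B⁰.comap (algebraMap R B) := fun s hs ↦
  mem_nonZeroDivisors_of_injective hB <| by
    rw [← IsScalarTower.algebraMap_apply]
    exact (IsLocalization.map_units K ⟨s, hs⟩).mem_nonZeroDivisors

theorem algebraMap_mem_nonZeroDivisors_of_injective (R : Type*) [CommRing R] [Algebra R B]
    [Algebra R K] [IsScalarTower R B K] [IsFractionRing R K]
    (hB : Function.Injective (algebraMap B K)) {t : B} (ht : t ∈ B⁰) :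
    algebraMap B K t ∈ K⁰ := by
  rw [mem_nonZeroDivisors_iff_right]
  intro z hz
  obtain ⟨⟨a, s⟩, hzs⟩ := IsLocalization.surj R⁰ z
  have hat : algebraMap R B a * t = 0 := hB <| by
    rw [map_mul, ← IsScalarTower.algebraMap_apply, ← hzs, mul_right_comm, hz, zero_mul, map_zero]
  have ha : algebraMap R B a = 0 := mem_nonZeroDivisors_iff_right.mp ht _ hat
  have hzs0 : z * algebraMap R K s = 0 := by
    rw [hzs, IsScalarTower.algebraMap_apply R B K, ha, map_zero]
  exact (IsLocalization.map_units K s).mul_left_eq_zero.mp hzs0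

theorem of_isScalarTower_of_injective (R : Type*) [CommRing R] [Algebra R B] [Algebra R K]
    [IsScalarTower R B K] [IsFractionRing R K] (hB : Function.Injective (algebraMap B K)) :
    IsFractionRing B K where
  map_units t := by
    rw [← IsUnit.mem_submonoid_iff, ← nonZeroDivisors_eq_isUnit R K]
    exact algebraMap_mem_nonZeroDivisors_of_injective R hB t.2
  surj z := by
    obtain ⟨⟨a, s⟩, hzs⟩ := IsLocalization.surj R⁰ z
    refine ⟨⟨algebraMap R B a, ⟨_, nonZeroDivisors_le_comap_of_injective (R := R) hB s.2⟩⟩, ?_⟩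
    simpa only [← IsScalarTower.algebraMap_apply] using hzs
  exists_of_eq h := ⟨1, by rw [hB h]⟩

end IsFractionRing

theorem conductorIdeal_le_comap (A B : Type*) [CommRing A] [CommRing B] [Algebra A B]
    [Algebra.IsIntegral A B] [Algebra B (FractionRing A)] [IsScalarTower A B (FractionRing A)]
    [IsFractionRing B (FractionRing A)] :
    conductorIdeal A ≤ (conductorIdeal B).comap (algebraMap A B) := by
  intro a ha x hx
  let e : FractionRing B ≃ₐ[B] FractionRing A :=
    IsLocalization.algEquiv B⁰ (FractionRing B) (FractionRing A)
  have hex : IsIntegral A (e x) := isIntegral_trans (R := A) _ ((hx : IsIntegral B x).map e)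
  obtain ⟨b, hb⟩ := ha (e x) hex
  refine ⟨algebraMap A B b, e.injective ?_⟩
  rw [map_mul, e.commutes, e.commutes, ← IsScalarTower.algebraMap_apply,
    ← IsScalarTower.algebraMap_apply]
  exact hb

theorem PrimeSpectrum.zeroLocus_subset_zeroLocus_radical_map {R S : Type*} [CommRing R]
    [CommRing S] (f : R →+* S) {C J : Ideal R} {C' : Ideal S} (hC : C ≤ C'.comap f)
    (hCJ : zeroLocus (C : Set R) ⊆ zeroLocus J) :
    zeroLocus (C' : Set S) ⊆ zeroLocus ((J.map f).radical : Set S) := by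
  rw [zeroLocus_radical, Ideal.map, zeroLocus_span, ← preimage_comap_zeroLocus]
  calc zeroLocus (C' : Set S) ⊆ zeroLocus (f '' C) :=
        zeroLocus_anti_mono (Set.image_subset_iff.mpr hC)
    _ = comap f ⁻¹' zeroLocus C := (preimage_comap_zeroLocus f _).symm
    _ ⊆ comap f ⁻¹' zeroLocus J := Set.preimage_mono hCJ

theorem IsTestIdeal.radical_map {A B : Type*} [CommRing A] [CommRing B] (f : A →+* B)
    (hf : A⁰ ≤ B⁰.comap f) (hC : conductorIdeal A ≤ (conductorIdeal B).comap f)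
    {J : Ideal A} (hJ : IsTestIdeal A J) : IsTestIdeal B (J.map f).radical := by
  obtain ⟨⟨g, hgJ, hg⟩, -, hV⟩ := hJ
  exact ⟨⟨f g, Ideal.le_radical (Ideal.mem_map_of_mem f hgJ), hf hg⟩, Ideal.radical_isRadical _,
    PrimeSpectrum.zeroLocus_subset_zeroLocus_radical_map f hC hV⟩

theorem radical_extension_is_test_ideal_general
    (A : Type*) [CommRing A]
    (A' : Subalgebra A (FractionRing A))
    (hA' : A' ≤ integralClosure A (FractionRing A))
    (J : Ideal A) (hJ : IsTestIdeal A J) :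
    IsTestIdeal A' ((J.map (algebraMap A A')).radical) := by
  have hA'inj : Function.Injective (algebraMap A' (FractionRing A)) := Subtype.val_injective
  have : IsFractionRing A' (FractionRing A) :=
    IsFractionRing.of_isScalarTower_of_injective A hA'inj
  have : Algebra.IsIntegral A A' := le_integralClosure_iff_isIntegral.mp hA'
  exact hJ.radical_map _ (IsFractionRing.nonZeroDivisors_le_comap_of_injective hA'inj)
    (conductorIdeal_le_comap A A')

/-- Let `A` be a reduced Noetherian ring with finite normalization,
let `A ⊆ A′ ⊆ Ā` be an intermediate ring (a subalgebra of `Q(A)` contained in the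
integral closure of `A`), and let `J` be a test ideal for `A`. Then `√(J·A′)` is a
test ideal for `A′`. -/
theorem radical_extension_is_test_ideal
    (A : Type*) [CommRing A] [IsReduced A] [IsNoetherianRing A]
    [Module.Finite A (integralClosure A (FractionRing A))]
    (A' : Subalgebra A (FractionRing A))
    (hA' : A' ≤ integralClosure A (FractionRing A))
    (J : Ideal A) (hJ : IsTestIdeal A J) :
    IsTestIdeal A' ((J.map (algebraMap A A')).radical) :=
  radical_extension_is_test_ideal_general A A' hA' J hJ
end
end

section
/- Let R be a commutative local ring whose maximal ideal m_R is not generated by a single non-zerodivisor of R. Then every R-module homomorphism φ : m_R → R has image contained in m_R; equivalently, under the natural inclusion, Hom_R(m_R, m_R) = Hom_R(m_R, R). -/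
set_option synthInstance.maxHeartbeats 1000000
set_option maxHeartbeats 1000000

open scoped nonZeroDivisors

/-- Let `R` be a commutative local ring whose maximal ideal `m_R` is
not generated by a single non-zerodivisor. Then every `R`-module homomorphism
`φ : m_R → R` has image contained in `m_R`; i.e. `Hom_R(m_R, m_R) = Hom_R(m_R, R)`. -/
theorem hom_maximalIdeal_self_eq_hom_ring
    (R : Type*) [CommRing R] [IsLocalRing R]
    (h : ¬ ∃ x ∈ R⁰, Ideal.span {x} = IsLocalRing.maximalIdeal R)
    (φ : (IsLocalRing.maximalIdeal R) →ₗ[R] R) :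
    ∀ x : IsLocalRing.maximalIdeal R, φ x ∈ IsLocalRing.maximalIdeal R := by
  intro x
  by_contra hx
  have hu : IsUnit (φ x) := by
    rw [IsLocalRing.mem_maximalIdeal] at hx
    exact not_not.mp hx
  have key : ∀ y : IsLocalRing.maximalIdeal R, (y : R) * φ x = (x : R) * φ y := by
    intro y
    have hyx : (y : R) • x = (x : R) • y := Subtype.ext (mul_comm _ _)
    rw [← smul_eq_mul, ← map_smul, hyx, map_smul, smul_eq_mul]
  apply h
  refine ⟨(x : R), ?_, ?_⟩
  · rw [mem_nonZeroDivisors_iff_right]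
    intro a ha
    have h0 : a • x = (0 : IsLocalRing.maximalIdeal R) := by
      apply Subtype.ext
      simpa [smul_eq_mul] using ha
    have : a * φ x = 0 := by
      rw [← smul_eq_mul, ← map_smul, h0, map_zero]
    exact hu.mul_left_eq_zero.mp this
  · apply le_antisymm
    · rw [Ideal.span_le, Set.singleton_subset_iff]
      exact x.2
    · intro y hy
      rw [Ideal.mem_span_singleton]
      obtain ⟨u, hu⟩ := hu
      refine ⟨φ ⟨y, hy⟩ * (↑u⁻¹ : R), ?_⟩
      have := key ⟨y, hy⟩
      calc y = y * φ x * ↑u⁻¹ := by rw [← hu, mul_assoc, u.mul_inv, mul_one]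
        _ = (x : R) * (φ ⟨y, hy⟩ * ↑u⁻¹) := by rw [this, mul_assoc]
end
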